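/- For the tree t_n = a(b(d^n) c(d(e)^n)) over Sigma = {a,b,c,d,e} and 1 <= k <= n, with padding symbol Box = a: (i) |t_n| = 3n+3; (ii) H^ell_k(t_n) = 3*log2(3) and H^{ell,deg}_k(t_n) = 0, hence H^ell_k(t_n) + H^{ell,deg}_k(t_n) = 3*log2(3); (iii) H^deg(t_n) >= 2n; (iv) the label-shape entropy satisfies H_k(t_n) >= 2(n-k+1). -/

import Mathlib

/-- Last `k` entries of a list. -/
def lastN {α} (k : ℕ) (l : List α) : List α := l.drop (l.length - k)

/-- Generic empirical entropy in per-node form: for each node `e` of `D` we add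
`log2 (#{e' | cond e' = cond e} / #{e' | cond e' = cond e ∧ val e' = val e})`.
Grouping nodes by the pair `(cond, val)` recovers the usual form
`∑_z ∑_w m_{z,w} log2 (m_z / m_{z,w})`. -/
noncomputable def entropySum {α β γ : Type*} [DecidableEq β] [DecidableEq γ]
    (D : List α) (cond : α → β) (val : α → γ) : ℝ :=
  (D.map (fun e => Real.logb 2
    ((D.countP (fun e' => decide (cond e' = cond e)) : ℝ) /
     (D.countP (fun e' => decide (cond e' = cond e ∧ val e' = val e)) : ℝ)))).sum

/-- `k`-label-history given the list of ancestor labels (padded with `box`). -/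
def kLabHist {σ} (box : σ) (k : ℕ) (h : List σ) : List σ :=
  lastN k (List.replicate k box ++ h)
-- Unranked ordered labeled trees and forests.
mutual
inductive UTree (σ : Type) where
  | node (a : σ) (children : UForest σ) : UTree σ
inductive UForest (σ : Type) where
  | nil : UForest σ
  | cons (t : UTree σ) (f : UForest σ) : UForest σ
end

/-- Number of trees in a forest. -/
def UForest.len {σ} : UForest σ → ℕ
  | .nil => 0
  | .cons _ f => 1 + f.len

mutual
/-- List of (label-history, label, degree) triples, one per node. -/
def udata {σ} (hist : List σ) : UTree σ → List (List σ × σ × ℕ)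
  | .node a f => (hist, a, f.len) :: fudata (hist ++ [a]) f
/-- Node data of a forest of subtrees rooted at label-history `hist`. -/
def fudata {σ} (hist : List σ) : UForest σ → List (List σ × σ × ℕ)
  | .nil => []
  | .cons t f => udata hist t ++ fudata hist f
end

/-- Number of nodes of an unranked tree. -/
def sizeU {σ} (t : UTree σ) : ℕ := (udata [] t).length
/-- `k`-th order label entropy `H^ℓ_k` of an unranked tree. -/
noncomputable def HlU {σ} [DecidableEq σ] (box : σ) (k : ℕ) (t : UTree σ) : ℝ :=
  entropySum (udata [] t) (fun e => kLabHist box k e.1) (fun e => e.2.1)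

/-- `k`-th order label-degree entropy `H^{ℓ,deg}_k` of an unranked tree. -/
noncomputable def HldU {σ} [DecidableEq σ] (box : σ) (k : ℕ) (t : UTree σ) : ℝ :=
  entropySum (udata [] t) (fun e => (kLabHist box k e.1, e.2.1)) (fun e => e.2.2)

/-- `k`-th order degree-label entropy `H^{deg,ℓ}_k` of an unranked tree. -/
noncomputable def HdlU {σ} [DecidableEq σ] (box : σ) (k : ℕ) (t : UTree σ) : ℝ :=
  entropySum (udata [] t) (fun e => (kLabHist box k e.1, e.2.2)) (fun e => e.2.1)

/-- Degree entropy `H^deg` of an unranked tree: `∑_i n_i log2(|t|/n_i)`. -/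
noncomputable def HdegU {σ} [DecidableEq σ] (t : UTree σ) : ℝ :=
  entropySum (udata [] t) (fun _ => ()) (fun e => e.2.2)
/-- Labeled binary trees: every node has 0 or 2 children. -/
inductive LBT (σ : Type) where
  | leaf (a : σ) : LBT σ
  | node (a : σ) (l r : LBT σ) : LBT σ

/-- List of (history, label, degree) triples of a binary tree, one per node.
The history records alternately labels and direction bits (`false` = left). -/
def ldata {σ} (hist : List (σ × Bool)) : LBT σ → List (List (σ × Bool) × σ × ℕ)
  | .leaf a => [(hist, a, 0)]
  | .node a l r =>
      (hist, a, 2) :: (ldata (hist ++ [(a, false)]) l ++ ldata (hist ++ [(a, true)]) r)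
/-- `k`-history of a node given its full history: the last `k` entries after
padding on the left with `(box, false)`. -/
def kHist {σ} (box : σ) (k : ℕ) (h : List (σ × Bool)) : List (σ × Bool) :=
  lastN k (List.replicate k (box, false) ++ h)

/-- `k`-th order label-shape entropy of a labeled binary tree. -/
noncomputable def Hls {σ} [DecidableEq σ] (box : σ) (k : ℕ) (t : LBT σ) : ℝ :=
  entropySum (ldata [] t) (fun e => kHist box k e.1) (fun e => e.2)
/-- The first-child next-sibling encoding of a forest: the left child of a node is
its first child, the right child its next sibling; missing children become
`box`-labeled dummy leaves. -/
def fcns {σ} (box : σ) : UForest σ → LBT σ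
  | .nil => .leaf box
  | .cons (.node a f) rest => .node a (fcns box f) (fcns box rest)

/-- The fcns encoding of a single unranked tree. -/
def fcnsT {σ} (box : σ) (t : UTree σ) : LBT σ := fcns box (.cons t .nil)

/-- The five-letter alphabet `{a, b, c, d, e}`. -/
inductive ABCDE where
  | a | b | c | d | e
deriving DecidableEq

/-- A single leaf node with label `x`. -/
def leafU {σ} (x : σ) : UTree σ := .node x .nil

/-- The forest `d^n` of `n` leaves labeled `d`. -/
def dLeaves : ℕ → UForest ABCDE
  | 0 => .nil
  | n + 1 => .cons (leafU .d) (dLeaves n)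

/-- The forest `(d(e))^n` of `n` unary `d`-nodes, each with a single `e`-leaf child. -/
def deForest : ℕ → UForest ABCDE
  | 0 => .nil
  | n + 1 => .cons (.node .d (.cons (leafU .e) .nil)) (deForest n)

/-- The tree `t_n = a(b(d^n) c(d(e)^n))`. -/
def tBD (n : ℕ) : UTree ABCDE :=
  .node .a (.cons (.node .b (dLeaves n)) (.cons (.node .c (deForest n)) .nil))

/-!
In `t_n` every node's ancestor path is determined by its parent label (the padding symbol `a`
makes the paths `[]` and `[a]` indistinguishable), so for `k ≥ 1` the `k`-label-history is as
informative as the parent label. Labels vary only under the padded history `a^k`, shared by the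
root `a` and its children `b` and `c`, which gives `3 log₂ 3`; label plus history fix the degree.
For `H^deg`, each of the at most `2n + 2` leaves carries at least half a bit and each of the
`n` unary nodes at least one bit. In `fcns(t_n)` the `k`-history `(d,1)^(k-1) (d,0)` is shared by
exactly `n - k + 1` dummy `a`-leaves and `n - k + 1` `e`-nodes, each of which carries one bit.
-/

open List

section EntropySum

variable {α β γ : Type*} [DecidableEq β] [DecidableEq γ]

noncomputable def entropyTerm (D : List α) (cond : α → β) (val : α → γ) (e : α) : ℝ :=
  Real.logb 2 ((D.countP (fun e' => decide (cond e' = cond e)) : ℝ) /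
    (D.countP (fun e' => decide (cond e' = cond e ∧ val e' = val e)) : ℝ))

variable {D : List α} {cond : α → β} {val : α → γ}

theorem entropySum_eq_sum_entropyTerm :
    entropySum D cond val = (D.map (entropyTerm D cond val)).sum := rfl

theorem le_entropyTerm_of_rpow_mul_le {e : α} (he : e ∈ D) {r : ℝ}
    (h : 2 ^ r * (D.countP (fun e' => decide (cond e' = cond e ∧ val e' = val e)) : ℝ) ≤
      D.countP (fun e' => decide (cond e' = cond e))) :
    r ≤ entropyTerm D cond val e := by
  have hJ : (0 : ℝ) < D.countP (fun e' => decide (cond e' = cond e ∧ val e' = val e)) := by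
    exact_mod_cast List.countP_pos_iff.mpr ⟨e, he, by simp⟩
  have hC := lt_of_lt_of_le (by positivity) h
  rw [entropyTerm, Real.le_logb_iff_rpow_le one_lt_two (div_pos hC hJ), le_div_iff₀ hJ]
  exact h

theorem entropyTerm_nonneg {e : α} (he : e ∈ D) :
    0 ≤ entropyTerm D cond val e :=
  le_entropyTerm_of_rpow_mul_le he <| by
    rw [Real.rpow_zero, one_mul]
    exact_mod_cast List.countP_mono_left fun x _ hx => by simp_all

theorem entropySum_perm {D' : List α} (h : D.Perm D') :
    entropySum D cond val = entropySum D' cond val := by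
  simp only [entropySum, h.countP_eq]
  exact (h.map _).sum_eq

theorem entropySum_congr_cond {β' : Type*} [DecidableEq β'] {cond' : α → β'}
    (h : ∀ e ∈ D, ∀ e' ∈ D, cond e' = cond e ↔ cond' e' = cond' e) :
    entropySum D cond val = entropySum D cond' val := by
  refine congrArg List.sum (List.map_congr_left fun e he => ?_)
  have hC : D.countP (fun e' => decide (cond e' = cond e)) =
      D.countP (fun e' => decide (cond' e' = cond' e)) :=
    List.countP_congr fun e' he' => by simpa using h e he e' he'
  have hJ : D.countP (fun e' => decide (cond e' = cond e ∧ val e' = val e)) =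
      D.countP (fun e' => decide (cond' e' = cond' e ∧ val e' = val e)) :=
    List.countP_congr fun e' he' => by simpa using and_congr_left' (h e he e' he')
  simp only [hC, hJ]

theorem two_mul_le_entropySum {z : β} {w₁ w₂ : γ} (hw : w₁ ≠ w₂) {m : ℕ}
    (hz : (D.filter (fun e => cond e = z)).map val = replicate m w₁ ++ replicate m w₂) :
    2 * (m : ℝ) ≤ entropySum D cond val := by
  have hclass : D.countP (fun e => cond e = z) = 2 * m := by
    rw [List.countP_eq_length_filter, ← List.length_map (f := val), hz]
    simp only [length_append, length_replicate]; omega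
  have hval : ∀ w ∈ [w₁, w₂], D.countP (fun e => cond e = z ∧ val e = w) = m := by
    intro w hw'
    have : D.countP (fun e => cond e = z ∧ val e = w) =
        ((D.filter (fun e => cond e = z)).map val).count w := by
      rw [List.count_eq_countP, List.countP_map, List.countP_filter]
      exact List.countP_congr fun x _ => by simp [and_comm]
    rw [this, hz]
    simp only [mem_cons, not_mem_nil, or_false] at hw'
    rcases hw' with rfl | rfl <;> simp [List.count_replicate, hw, hw.symm]
  have hterm : ∀ e ∈ D, (if cond e = z then 1 else 0) ≤ entropyTerm D cond val e := by
    intro e he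
    split_ifs with hez
    · apply le_entropyTerm_of_rpow_mul_le he
      have hmem : val e ∈ [w₁, w₂] := by
        have : val e ∈ (D.filter (fun e => cond e = z)).map val :=
          List.mem_map_of_mem (List.mem_filter.mpr ⟨he, by simpa using hez⟩)
        rw [hz] at this
        simp only [mem_append, mem_replicate, mem_cons, not_mem_nil, or_false] at this ⊢
        exact this.imp And.right And.right
      rw [hez, hval _ hmem, hclass]
      simp
    · exact entropyTerm_nonneg he
  calc 2 * (m : ℝ) = (D.map fun e => if cond e = z then (1 : ℝ) else 0).sum := by
        rw [List.countP_eq_length_filter] at hclass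
        simp [List.sum_map_ite, hclass]
    _ ≤ entropySum D cond val := List.sum_le_sum hterm

end EntropySum

theorem List.take_replicate_append_eq_replicate_iff {α : Type*} {y : α} {R : List α}
    (hR : R.head? ≠ some y) {i j : ℕ} :
    (replicate i y ++ R).take j = replicate j y ↔ j ≤ i := by
  induction j generalizing i with
  | zero => simp
  | succ j ih =>
    cases i with
    | zero => cases R <;> simp_all [replicate_succ]
    | succ i => simp [replicate_succ, ih]

theorem ite_singleton_append_replicate {α : Type*} (w : α) (i j m : ℕ) :
    (if m ≤ i then [w] else []) ++ replicate (j - (m - (i + 1))) w =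
      replicate (j + 1 - (m - i)) w := by
  split_ifs with h
  · rw [show j + 1 - (m - i) = j - (m - (i + 1)) + 1 by omega, replicate_succ]; rfl
  · rw [show j + 1 - (m - i) = j - (m - (i + 1)) by omega, nil_append]

section kLabHist

variable {σ : Type*} (box : σ)

theorem kLabHist_one (h : List σ) : kLabHist box 1 h = [h.getLast?.getD box] := by
  simp only [kLabHist, lastN, replicate_one, singleton_append, length_cons, Nat.add_sub_cancel]
  induction h generalizing box with
  | nil => rfl
  | cons x t ih => simpa [getLast?_cons] using ih x

theorem getLast?_kLabHist {k : ℕ} (hk : 1 ≤ k) (h : List σ) :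
    (kLabHist box k h).getLast? = some (h.getLast?.getD box) := by
  rcases h.eq_nil_or_concat with rfl | ⟨l, x, rfl⟩ <;>
    simp [kLabHist, lastN, List.getLast?_drop, getLast?_replicate, Nat.one_le_iff_ne_zero.mp hk]

theorem kLabHist_singleton_box (k : ℕ) : kLabHist box k [box] = kLabHist box k [] := by
  simp [kLabHist, lastN, ← replicate_succ']

end kLabHist

section kHist

variable {σ : Type*} {box x : σ} {k : ℕ}

/-- The `k`-history of a left child hanging below at least `k - 1` right-spine steps of
`x`-nodes. -/
def spineHist (x : σ) (k : ℕ) : List (σ × Bool) := replicate (k - 1) (x, true) ++ [(x, false)]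

theorem kHist_eq_reverse_take (box : σ) (k : ℕ) (L : List (σ × Bool)) :
    kHist box k L = ((L.reverse ++ replicate k (box, false)).take k).reverse := by
  rw [show L.reverse ++ replicate k (box, false) = (replicate k (box, false) ++ L).reverse by simp,
    take_reverse, reverse_reverse, kHist, lastN]

-- `hL` is stated with `¬ _ = _` rather than `≠` so that `simp` can discharge it.
theorem kHist_ne_spineHist (hk : 1 ≤ k) {L : List (σ × Bool)}
    (hL : ¬L.getLast?.getD (box, false) = (x, false)) : kHist box k L ≠ spineHist x k := by
  obtain ⟨j, rfl⟩ : ∃ j, k = j + 1 := ⟨k - 1, by omega⟩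
  intro h
  have := congrArg (fun l => l.getLast?) h
  rcases L.eq_nil_or_concat with rfl | ⟨l, y, rfl⟩ <;>
    simp_all [kHist_eq_reverse_take, spineHist, replicate_succ]

theorem kHist_append_spineHist_iff (hk : 1 ≤ k) {h : List (σ × Bool)}
    (hh : h.getLast?.getD (box, false) ≠ (x, true)) (i : ℕ) :
    kHist box k (h ++ replicate i (x, true) ++ [(x, false)]) = spineHist x k ↔ k - 1 ≤ i := by
  obtain ⟨j, rfl⟩ : ∃ j, k = j + 1 := ⟨k - 1, by omega⟩
  have hR : (h.reverse ++ replicate (j + 1) (box, false)).head? ≠ some (x, true) := by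
    rcases h.eq_nil_or_concat with rfl | ⟨l, y, rfl⟩ <;> simp_all [replicate_succ]
  rw [kHist_eq_reverse_take, spineHist, reverse_eq_iff]
  simp [take_replicate_append_eq_replicate_iff hR]

end kHist

theorem UForest.len_dLeaves (n : ℕ) : (dLeaves n).len = n := by
  induction n with
  | zero => rfl
  | succ n ih => simp only [dLeaves, UForest.len, ih]; omega

theorem UForest.len_deForest (n : ℕ) : (deForest n).len = n := by
  induction n with
  | zero => rfl
  | succ n ih => simp only [deForest, UForest.len, ih]; omega

theorem fudata_dLeaves (h : List ABCDE) (n : ℕ) :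
    fudata h (dLeaves n) = replicate n (h, .d, 0) := by
  induction n with
  | zero => rfl
  | succ n ih => simp [dLeaves, fudata, udata, leafU, UForest.len, ih, replicate_succ]

theorem fudata_deForest_perm (h : List ABCDE) (n : ℕ) :
    (fudata h (deForest n)).Perm (replicate n (h, .d, 1) ++ replicate n (h ++ [.d], .e, 0)) := by
  induction n with
  | zero => rfl
  | succ n ih =>
    simp only [deForest, fudata, udata, leafU, UForest.len, replicate_succ, add_zero, append_nil,
      cons_append]
    exact .cons _ ((ih.cons _).trans perm_middle.symm)

def tBDNodes (n : ℕ) : List (List ABCDE × ABCDE × ℕ) :=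
  [([], .a, 2), ([.a], .b, n), ([.a], .c, n)] ++ replicate n ([.a, .b], .d, 0) ++
    replicate n ([.a, .c], .d, 1) ++ replicate n ([.a, .c, .d], .e, 0)

theorem udata_tBD_perm (n : ℕ) : (udata [] (tBD n)).Perm (tBDNodes n) := by
  simp only [tBD, udata, fudata, UForest.len, UForest.len_dLeaves, UForest.len_deForest,
    fudata_dLeaves, tBDNodes, nil_append, append_nil, cons_append, append_assoc, Nat.add_zero]
  refine .cons _ (.cons _ (perm_middle.trans (.cons _ ((fudata_deForest_perm _ _).append_left _))))

def tBDPaths : List (List ABCDE) := [[], [.a], [.a, .b], [.a, .c], [.a, .c, .d]]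

theorem kLabHist_eq_iff_of_mem_tBDPaths {k : ℕ} (hk : 1 ≤ k) {h h' : List ABCDE}
    (hh : h ∈ tBDPaths) (hh' : h' ∈ tBDPaths) :
    kLabHist .a k h = kLabHist .a k h' ↔ kLabHist .a 1 h = kLabHist .a 1 h' := by
  refine ⟨fun heq => ?_, fun heq => ?_⟩
  · simpa [kLabHist_one, getLast?_kLabHist _ hk] using congrArg List.getLast? heq
  · simp only [tBDPaths, mem_cons, not_mem_nil, or_false] at hh hh'
    rcases hh with rfl | rfl | rfl | rfl | rfl <;> rcases hh' with rfl | rfl | rfl | rfl | rfl <;>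
      simp_all [kLabHist_one, kLabHist_singleton_box]

theorem fst_mem_of_mem_tBDNodes {n : ℕ} {e : List ABCDE × ABCDE × ℕ} (he : e ∈ tBDNodes n) :
    e.1 ∈ tBDPaths := by
  simp only [tBDNodes, cons_append, nil_append, mem_cons, mem_append, mem_replicate] at he
  rcases he with rfl | rfl | rfl | (((⟨-, rfl⟩ | ⟨-, rfl⟩) | ⟨-, rfl⟩)) <;>
    simp [tBDPaths]

theorem sizeU_tBD (n : ℕ) : sizeU (tBD n) = 3 * n + 3 := by
  rw [sizeU, (udata_tBD_perm n).length_eq]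
  simp only [tBDNodes, length_append, length_cons, length_replicate, length_nil]
  omega

theorem HlU_tBD {n k : ℕ} (hk : 1 ≤ k) : HlU .a k (tBD n) = 3 * Real.logb 2 3 :=
  calc HlU .a k (tBD n)
      = entropySum (tBDNodes n) (fun e => kLabHist .a k e.1) (fun e => e.2.1) :=
        entropySum_perm (udata_tBD_perm n)
    _ = entropySum (tBDNodes n) (fun e => kLabHist .a 1 e.1) (fun e => e.2.1) :=
        entropySum_congr_cond fun e he e' he' => kLabHist_eq_iff_of_mem_tBDPaths hk
          (fst_mem_of_mem_tBDNodes he') (fst_mem_of_mem_tBDNodes he)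
    _ = 3 * Real.logb 2 3 := by
        have h3 (x : ℝ) : x + (x + x) = 3 * x := by ring
        rcases eq_or_ne n 0 with hn | hn <;>
          simp [entropySum, tBDNodes, kLabHist_one, countP_replicate, hn, h3]

theorem HldU_tBD {n k : ℕ} (hk : 1 ≤ k) : HldU .a k (tBD n) = 0 :=
  calc HldU .a k (tBD n)
      = entropySum (tBDNodes n) (fun e => (kLabHist .a k e.1, e.2.1)) (fun e => e.2.2) :=
        entropySum_perm (udata_tBD_perm n)
    _ = entropySum (tBDNodes n) (fun e => (kLabHist .a 1 e.1, e.2.1)) (fun e => e.2.2) :=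
        entropySum_congr_cond fun e he e' he' => by
          simp only [Prod.mk.injEq, kLabHist_eq_iff_of_mem_tBDPaths hk
            (fst_mem_of_mem_tBDNodes he') (fst_mem_of_mem_tBDNodes he)]
    _ = 0 := by
        rcases eq_or_ne n 0 with hn | hn <;>
          simp [entropySum, tBDNodes, kLabHist_one, countP_replicate, hn]

theorem two_rpow_half_le : (2 : ℝ) ^ (1 / 2 : ℝ) ≤ 3 / 2 := by
  rw [← Real.sqrt_eq_rpow, Real.sqrt_le_left (by norm_num)]
  norm_num

theorem countP_leaf_tBDNodes_le (n : ℕ) :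
    (tBDNodes n).countP (fun e => e.2.2 = 0) ≤ 2 * n + 2 := by
  simp only [tBDNodes, cons_append, nil_append, append_assoc, OfNat.ofNat_ne_zero, decide_false,
    Bool.false_eq_true, not_false_eq_true, countP_cons_of_neg, countP_cons, countP_append,
    countP_replicate, decide_true, ↓reduceIte, one_ne_zero, zero_add, decide_eq_true_eq]
  split_ifs <;> omega

theorem two_mul_countP_unary_tBDNodes_le (n : ℕ) :
    2 * (tBDNodes n).countP (fun e => e.2.2 = 1) ≤ 3 * n + 3 := by
  simp only [tBDNodes, cons_append, nil_append, append_assoc, OfNat.ofNat_ne_one, decide_false,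
    Bool.false_eq_true, not_false_eq_true, countP_cons_of_neg, countP_cons, countP_append,
    countP_replicate, zero_ne_one, ↓reduceIte, decide_true, add_zero, zero_add, decide_eq_true_eq]
  split_ifs <;> omega

theorem two_mul_le_HdegU_tBD (n : ℕ) : (2 * n : ℝ) ≤ HdegU (tBD n) := by
  rw [HdegU, entropySum_perm (udata_tBD_perm n), entropySum_eq_sum_entropyTerm]
  set D := tBDNodes n
  have hsize : D.length = 3 * n + 3 := by
    simp only [D, tBDNodes, length_append, length_cons, length_replicate, length_nil]
    omega
  let f : List ABCDE × ABCDE × ℕ → ℝ := fun e =>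
    if e.2.2 = 0 then 1 / 2 else if e.2.2 = 1 then 1 else 0
  have hf : ∀ e ∈ D, f e ≤ entropyTerm D (fun _ => ()) (fun e => e.2.2) e := by
    intro e he
    simp only [f]
    split_ifs with h0 h1
    · apply le_entropyTerm_of_rpow_mul_le he
      simp only [h0, true_and, decide_true, countP_true, hsize]
      have hleaves : (D.countP (fun e => e.2.2 = 0) : ℝ) ≤ 2 * n + 2 := by
        exact_mod_cast countP_leaf_tBDNodes_le n
      push_cast
      nlinarith [two_rpow_half_le, Real.rpow_nonneg (zero_le_two (α := ℝ)) (1 / 2)]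
    · apply le_entropyTerm_of_rpow_mul_le he
      simp only [h1, true_and, decide_true, countP_true, hsize, Real.rpow_one]
      exact_mod_cast two_mul_countP_unary_tBDNodes_le n
    · exact entropyTerm_nonneg he
  calc (2 * n : ℝ) ≤ (D.map f).sum := by
        simp only [D, tBDNodes, f, cons_append, nil_append, append_assoc, map_cons, map_append,
          map_replicate, OfNat.ofNat_ne_zero, OfNat.ofNat_ne_one, one_ne_zero, ↓reduceIte,
          sum_cons, sum_append, sum_replicate, nsmul_eq_mul, mul_one, zero_add]
        split_ifs <;> linarith
    _ ≤ _ := List.sum_le_sum hf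

section Spine

variable {k : ℕ} {h : List (ABCDE × Bool)}

theorem kHist_append_replicate_ne_spineHist (hk : 1 ≤ k)
    (hh : h.getLast?.getD (.a, false) ≠ (.d, false)) (i : ℕ) :
    kHist .a k (h ++ replicate i (.d, true)) ≠ spineHist .d k := by
  apply kHist_ne_spineHist hk
  cases i <;> simp_all [getLast?_replicate]

theorem filter_ldata_fcns_dLeaves (hk : 1 ≤ k)
    (hh : h.getLast?.getD (.a, false) ≠ (.d, true))
    (hh' : h.getLast?.getD (.a, false) ≠ (.d, false)) (j i : ℕ) :
    ((ldata (h ++ replicate i (.d, true)) (fcns .a (dLeaves j))).filter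
        (fun e => kHist .a k e.1 = spineHist .d k)).map (·.2) =
      replicate (j - (k - 1 - i)) (.a, 0) := by
  induction j generalizing i with
  | zero => simp [dLeaves, fcns, ldata, kHist_append_replicate_ne_spineHist hk hh']
  | succ j ih =>
    have hnext : h ++ replicate i (ABCDE.d, true) ++ [(.d, true)] =
        h ++ replicate (i + 1) (.d, true) := by simp [replicate_succ']
    simp only [dLeaves, leafU, fcns, ldata, hnext, filter_cons, filter_append,
      kHist_append_replicate_ne_spineHist hk hh', kHist_append_spineHist_iff hk hh, decide_false,
      Bool.false_eq_true, if_false, filter_nil, map_append, ih, decide_eq_true_eq]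
    rw [← ite_singleton_append_replicate]
    split_ifs <;> rfl

theorem filter_ldata_fcns_deForest (hk : 1 ≤ k)
    (hh : h.getLast?.getD (.a, false) ≠ (.d, true))
    (hh' : h.getLast?.getD (.a, false) ≠ (.d, false)) (j i : ℕ) :
    ((ldata (h ++ replicate i (.d, true)) (fcns .a (deForest j))).filter
        (fun e => kHist .a k e.1 = spineHist .d k)).map (·.2) =
      replicate (j - (k - 1 - i)) (.e, 2) := by
  induction j generalizing i with
  | zero => simp [deForest, fcns, ldata, kHist_append_replicate_ne_spineHist hk hh']
  | succ j ih =>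
    have hnext : h ++ replicate i (ABCDE.d, true) ++ [(.d, true)] =
        h ++ replicate (i + 1) (.d, true) := by simp [replicate_succ']
    have he (L : List (ABCDE × Bool)) (b : Bool) :
        kHist .a k (L ++ [(.e, b)]) ≠ spineHist .d k :=
      kHist_ne_spineHist hk (by simp)
    simp only [deForest, leafU, fcns, ldata, hnext, filter_cons, filter_append,
      kHist_append_replicate_ne_spineHist hk hh', kHist_append_spineHist_iff hk hh, he,
      decide_false, Bool.false_eq_true, if_false, filter_nil, map_append, ih, decide_eq_true_eq,
      append_nil]
    rw [← ite_singleton_append_replicate]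
    split_ifs <;> rfl

end Spine

theorem filter_ldata_fcnsT_tBD {k : ℕ} (hk : 1 ≤ k) (n : ℕ) :
    ((ldata [] (fcnsT .a (tBD n))).filter
        (fun e => kHist .a k e.1 = spineHist .d k)).map (·.2) =
      replicate (n - (k - 1)) (.a, 0) ++ replicate (n - (k - 1)) (.e, 2) := by
  have hb := filter_ldata_fcns_dLeaves hk (h := [(.a, false), (.b, false)]) (by simp) (by simp) n 0
  have hc := filter_ldata_fcns_deForest hk (h := [(.a, false), (.b, true), (.c, false)])
    (by simp) (by simp) n 0
  simp only [replicate_zero, append_nil, Nat.sub_zero] at hb hc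
  simp [fcnsT, tBD, fcns, ldata, hb, hc, kHist_ne_spineHist hk]

/-- For `t_n = a(b(d^n) c(d(e)^n))` and `1 ≤ k ≤ n` (with padding symbol `a`):
(i) `|t_n| = 3n + 3`; (ii) `H^ℓ_k(t_n) = 3 log2 3` and `H^{ℓ,deg}_k(t_n) = 0`, hence
`H^ℓ_k(t_n) + H^{ℓ,deg}_k(t_n) = 3 log2 3`; (iii) `H^deg(t_n) ≥ 2n`;
(iv) `H_k(t_n) ≥ 2(n - k + 1)`. -/
theorem tBD_entropies (n k : ℕ) (hk : 1 ≤ k) (hkn : k ≤ n) :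
    sizeU (tBD n) = 3 * n + 3 ∧
    HlU ABCDE.a k (tBD n) = 3 * Real.logb 2 3 ∧
    HldU ABCDE.a k (tBD n) = 0 ∧
    HlU ABCDE.a k (tBD n) + HldU ABCDE.a k (tBD n) = 3 * Real.logb 2 3 ∧
    (2 * n : ℝ) ≤ HdegU (tBD n) ∧
    (2 * ((n : ℝ) - (k : ℝ) + 1)) ≤ Hls ABCDE.a k (fcnsT ABCDE.a (tBD n)) := by
  refine ⟨sizeU_tBD n, HlU_tBD hk, HldU_tBD hk, by rw [HlU_tBD hk, HldU_tBD hk, add_zero],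
    two_mul_le_HdegU_tBD n, ?_⟩
  have hm : ((n - (k - 1) : ℕ) : ℝ) = n - k + 1 := by
    rw [Nat.cast_sub (by omega), Nat.cast_sub hk, Nat.cast_one]
    ring
  rw [← hm]
  exact two_mul_le_entropySum (by decide) (filter_ldata_fcnsT_tBD hk n)
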